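/- For the k-price auction with 2 ≤ k ≤ n, an agent i, and a price p with v_i > v_{n−(k−3)} and v_{n−(k−3)} ≤ p ≤ v_i (with v_{n+1} := 0), the bid profile in which agent i bids v_1, the k−2 lowest-valuation agents other than i bid v_1, and every other agent bids p, is a pure-strategy Nash equilibrium in which agent i wins and pays p. -/

import Mathlib

/-
Agent `i` and the `k - 2` agents of lowest valuation bid `v₁`, everyone else bids `p`, so
exactly `k - 1` bids exceed `p` when `p < v₁` and the `k`-th highest bid is `p`.  Every bid is
at least `p`, so a winning deviation never costs less than `p`: this protects `i` and also the
other `v₁`-bidders, whose values are at most `v_{n+3-k} ≤ p`.  Any remaining agent has to bid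
at least `v₁` to win, and then `k` bids are at least `v₁`, so she pays at least `v₁`, more than
her value.
-/

open Classical

/-- The k-th highest bid (k counted from 1). -/
noncomputable def kthHighest {n : ℕ} (b : Fin n → ℝ) (k : ℕ) : ℝ :=
  ((List.ofFn b).mergeSort (fun x y => decide (y ≤ x))).getD (k - 1) 0

/-- Agent `i` wins: her bid is highest, with ties broken toward the
agent with the highest valuation, i.e. (for strictly decreasing valuations)
the lowest index among the maximal bidders. -/
def wins {n : ℕ} (b : Fin n → ℝ) (i : Fin n) : Prop :=
  (∀ j, b j ≤ b i) ∧ ∀ j, b j = b i → i ≤ j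

/-- The price paid by the winner in the k-price auction (2 ≤ k ≤ n), or in the
first-price auction (the case k = n+1), where the winner pays the highest bid. -/
noncomputable def price {n : ℕ} (k : ℕ) (b : Fin n → ℝ) : ℝ :=
  if k = n + 1 then kthHighest b 1 else kthHighest b k

/-- The winner gets her valuation minus the price; losers get 0. -/
noncomputable def utility {n : ℕ} (v : Fin n → ℝ) (k : ℕ) (b : Fin n → ℝ)
    (i : Fin n) : ℝ :=
  if wins b i then v i - price k b else 0

/-- Pure-strategy Nash equilibrium with nonnegative bids: no agent can strictly
improve her utility by a unilateral deviation to another nonnegative bid. -/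
def NashEq {n : ℕ} (v : Fin n → ℝ) (k : ℕ) (b : Fin n → ℝ) : Prop :=
  (∀ i, 0 ≤ b i) ∧
  ∀ i : Fin n, ∀ b' : ℝ, 0 ≤ b' →
    utility v k (Function.update b i b') i ≤ utility v k b i

/-- One-based valuation indexing, with the convention `v_{n+1} = 0`. -/
noncomputable def vIdx {n : ℕ} (v : Fin n → ℝ) (j : ℕ) : ℝ :=
  if h : 1 ≤ j ∧ j ≤ n then v ⟨j - 1, by omega⟩ else 0

open Finset

namespace List

variable {l : List ℝ} {t : ℝ} {m : ℕ}

theorem Pairwise.le_getD_of_lt_countP (hl : l.Pairwise (· ≥ ·))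
    (h : m < l.countP (t ≤ ·)) : t ≤ l.getD m 0 := by
  have hm : m < l.length := h.trans_le (countP_le_length)
  rw [getD_eq_getElem l 0 hm]
  by_contra! hlt
  have hdrop : (l.drop m).countP (t ≤ ·) = 0 := by
    rw [countP_eq_zero]
    intro x hx
    rw [drop_eq_getElem_cons hm, mem_cons] at hx
    rcases hx with rfl | hx
    · simpa using hlt
    · have hs : (l[m] :: l.drop (m + 1)).Pairwise (· ≥ ·) :=
        drop_eq_getElem_cons hm ▸ hl.drop
      simpa using (rel_of_pairwise_cons hs hx).trans_lt hlt
  have htake := (l.take m).countP_le_length (p := (t ≤ ·))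
  rw [← take_append_drop m l, countP_append, hdrop] at h
  simp only [length_take] at htake
  omega

theorem Pairwise.getD_le_of_countP_le (hl : l.Pairwise (· ≥ ·)) (hm : m < l.length)
    (h : l.countP (t < ·) ≤ m) : l.getD m 0 ≤ t := by
  rw [getD_eq_getElem l 0 hm]
  by_contra! hlt
  have htake : (l.take (m + 1)).countP (t < ·) = m + 1 := by
    rw [countP_eq_length.mpr, length_take, min_eq_left hm]
    intro x hx
    obtain ⟨j, hj, rfl⟩ := mem_take_iff_getElem.mp hx
    have hjm : l[m] ≤ l[j] := by
      rcases lt_or_eq_of_le (Nat.le_of_lt_succ (lt_min_iff.mp hj).1) with hjm | rfl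
      · exact pairwise_iff_getElem.mp hl j m _ hm hjm
      · exact le_rfl
    simpa using hlt.trans_le hjm
  have := (take_sublist (m + 1) l).countP_le (p := (t < ·))
  omega

end List

section KthHighest

variable {n k : ℕ} {b : Fin n → ℝ} {t : ℝ}

theorem countP_ofFn_eq_card_filter (b : Fin n → ℝ) (q : ℝ → Prop) [DecidablePred q] :
    (List.ofFn b).countP (fun x => decide (q x)) = #{j | q (b j)} := by
  rw [← Multiset.coe_countP, ← Fin.univ_val_map, Multiset.countP_map, card_def, filter_val]

theorem kthHighest_eq_getD (b : Fin n → ℝ) (k : ℕ) :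
    ∃ l : List ℝ, l.Perm (List.ofFn b) ∧ l.Pairwise (· ≥ ·) ∧
      kthHighest b k = l.getD (k - 1) 0 :=
  ⟨_, List.mergeSort_perm _ _,
    by simpa using (List.pairwise_mergeSort (le := fun x y : ℝ => decide (y ≤ x))
      (fun _ _ _ hab hbc => by simp_all; linarith) (fun x y => by simpa using le_total y x) _),
    rfl⟩

theorem le_kthHighest_of_le_card (hk : 1 ≤ k) (h : k ≤ #{j | t ≤ b j}) :
    t ≤ kthHighest b k := by
  obtain ⟨l, hperm, hsort, hkth⟩ := kthHighest_eq_getD b k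
  rw [hkth]
  refine hsort.le_getD_of_lt_countP ?_
  rw [hperm.countP_eq, countP_ofFn_eq_card_filter]
  omega

theorem kthHighest_le_of_card_lt (hk : 1 ≤ k) (hkn : k ≤ n) (h : #{j | t < b j} < k) :
    kthHighest b k ≤ t := by
  obtain ⟨l, hperm, hsort, hkth⟩ := kthHighest_eq_getD b k
  rw [hkth]
  refine hsort.getD_le_of_countP_le (by rw [hperm.length_eq, List.length_ofFn]; omega) ?_
  rw [hperm.countP_eq, countP_ofFn_eq_card_filter]
  omega

theorem price_eq_kthHighest (hkn : k ≤ n) (b : Fin n → ℝ) : price k b = kthHighest b k :=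
  if_neg (by omega)

theorem le_price_of_le_card (hk : 1 ≤ k) (hkn : k ≤ n) (h : k ≤ #{j | t ≤ b j}) :
    t ≤ price k b :=
  price_eq_kthHighest hkn b ▸ le_kthHighest_of_le_card hk h

theorem le_price_of_forall_le (hk : 1 ≤ k) (hkn : k ≤ n) (h : ∀ j, t ≤ b j) :
    t ≤ price k b :=
  le_price_of_le_card hk hkn (by simpa [filter_true_of_mem fun j _ => h j] using hkn)

theorem price_le_of_card_lt (hk : 1 ≤ k) (hkn : k ≤ n) (h : #{j | t < b j} < k) :
    price k b ≤ t :=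
  price_eq_kthHighest hkn b ▸ kthHighest_le_of_card_lt hk hkn h

end KthHighest

theorem Fin.card_filter_le_val {n : ℕ} (m : ℕ) : #{j : Fin n | m ≤ (j : ℕ)} = n - m := by
  have := card_filter_add_card_filter_not (s := (univ : Finset (Fin n))) (fun j => (j : ℕ) < m)
  simp only [Fin.card_filter_val_lt, not_lt, card_univ, Fintype.card_fin] at this
  omega

section Equilibrium

variable {n k : ℕ} {v b : Fin n → ℝ} {i j : Fin n}

theorem wins.eq (hi : wins b i) (hj : wins b j) : i = j :=
  le_antisymm (hi.2 j (le_antisymm (hi.1 j) (hj.1 i))) (hj.2 i (le_antisymm (hj.1 i) (hi.1 j)))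

theorem utility_of_wins (h : wins b i) : utility v k b i = v i - price k b := if_pos h

theorem utility_of_not_wins (h : ¬ wins b i) : utility v k b i = 0 := if_neg h

theorem nashEq_of_deviations (hb : ∀ j, 0 ≤ b j) (hi : wins b i) (hpi : price k b ≤ v i)
    (hwinner : ∀ b' ≥ 0, wins (Function.update b i b') i →
      price k b ≤ price k (Function.update b i b'))
    (hloser : ∀ j ≠ i, ∀ b' ≥ 0, wins (Function.update b j b') j →
      v j ≤ price k (Function.update b j b')) :
    NashEq v k b := by
  refine ⟨hb, fun j b' hb' => ?_⟩
  by_cases hji : j = i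
  · subst hji
    rw [utility_of_wins hi]
    by_cases hw : wins (Function.update b j b') j
    · rw [utility_of_wins hw]
      linarith [hwinner b' hb' hw]
    · rw [utility_of_not_wins hw]
      linarith
  · rw [utility_of_not_wins fun hj => hji (hj.eq hi)]
    by_cases hw : wins (Function.update b j b') j
    · rw [utility_of_wins hw]
      linarith [hloser j hji b' hb' hw]
    · rw [utility_of_not_wins hw]

theorem le_price_update_of_wins (hk : 2 ≤ k) (hkn : k ≤ n) {t b' : ℝ} (ht : ∀ l, t ≤ b l)
    (hw : wins (Function.update b j b') j) : t ≤ price k (Function.update b j b') := by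
  have : Nontrivial (Fin n) := Fin.nontrivial_iff_two_le.mpr (by omega)
  obtain ⟨l₀, hl₀⟩ := exists_ne j
  refine le_price_of_forall_le (by omega) hkn fun l => ?_
  rcases eq_or_ne l j with rfl | hl
  · calc t ≤ b l₀ := ht l₀
      _ = Function.update b l b' l₀ := (Function.update_of_ne hl₀ _ _).symm
      _ ≤ _ := hw.1 l₀
  · rw [Function.update_of_ne hl]
    exact ht l

end Equilibrium

section TwoLevel

variable {n k : ℕ} {v : Fin n → ℝ} {H : Finset (Fin n)} {h p : ℝ} {i : Fin n}

def twoLevelBids (H : Finset (Fin n)) (h p : ℝ) : Fin n → ℝ :=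
  fun j => if j ∈ H then h else p

theorem le_twoLevelBids (hph : p ≤ h) (j : Fin n) : p ≤ twoLevelBids H h p j := by
  unfold twoLevelBids; split_ifs <;> linarith

theorem twoLevelBids_le (hph : p ≤ h) (j : Fin n) : twoLevelBids H h p j ≤ h := by
  unfold twoLevelBids; split_ifs <;> linarith

theorem price_twoLevelBids (hk : 1 ≤ k) (hkn : k ≤ n) (hph : p ≤ h) (hH : #H < k) :
    price k (twoLevelBids H h p) = p := by
  refine le_antisymm (price_le_of_card_lt hk hkn ?_)
    (le_price_of_forall_le hk hkn (le_twoLevelBids hph))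
  refine (card_le_card fun j hj => ?_).trans_lt hH
  by_contra hjH
  rw [mem_filter] at hj
  simp [twoLevelBids, hjH] at hj

theorem nashEq_twoLevelBids (hk : 2 ≤ k) (hkn : k ≤ n) (hp : 0 ≤ p) (hph : p ≤ h)
    (hiH : i ∈ H) (hH : #H + 1 = k) (hi : wins (twoLevelBids H h p) i) (hpi : p ≤ v i)
    (hvh : ∀ j, v j ≤ h) (hvH : ∀ j ∈ H, j ≠ i → v j ≤ p) :
    NashEq v k (twoLevelBids H h p) := by
  have hprice := price_twoLevelBids (by omega) hkn hph (by omega : #H < k)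
  refine nashEq_of_deviations (fun j => hp.trans (le_twoLevelBids hph j)) hi
    (by rw [hprice]; exact hpi) (fun b' _ hw => ?_) fun j hji b' _ hw => ?_
  · rw [hprice]
    exact le_price_update_of_wins hk hkn (le_twoLevelBids hph) hw
  by_cases hjH : j ∈ H
  · exact (hvH j hjH hji).trans (le_price_update_of_wins hk hkn (le_twoLevelBids hph) hw)
  -- an outsider can only win by matching `h`, which then becomes the `k`-th highest bid
  refine (hvh j).trans (le_price_of_le_card (by omega) hkn ?_)
  have hb' : h ≤ b' := by
    simpa [Function.update_of_ne (Ne.symm hji), twoLevelBids, hiH] using hw.1 i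
  calc k = #(insert j H) := by rw [card_insert_of_notMem hjH, hH]
    _ ≤ _ := card_le_card fun l hl => by
      rcases mem_insert.mp hl with rfl | hlH
      · simpa using hb'
      · have hlj : l ≠ j := by rintro rfl; exact hjH hlH
        simp [Function.update_of_ne hlj, twoLevelBids, hlH]

theorem wins_twoLevelBids (hph : p ≤ h) (hiH : i ∈ H) (hH : ∀ j ∈ H, i ≤ j)
    (htie : p = h → ∀ j, i ≤ j) : wins (twoLevelBids H h p) i := by
  refine ⟨fun j => by simpa [twoLevelBids, hiH] using twoLevelBids_le hph j, fun j hj => ?_⟩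
  by_cases hjH : j ∈ H
  · exact hH j hjH
  · simp only [twoLevelBids, hjH, hiH, if_true, if_false] at hj
    exact htie hj j

end TwoLevel

section vIdx

variable {n : ℕ} {v : Fin n → ℝ}

theorem vIdx_nonneg (hv : ∀ j, 0 ≤ v j) (m : ℕ) : 0 ≤ vIdx v m := by
  unfold vIdx; split_ifs
  exacts [hv _, le_rfl]

theorem apply_le_vIdx_succ (hv : Antitone v) {m : ℕ} {j : Fin n} (hj : m ≤ j) :
    v j ≤ vIdx v (m + 1) := by
  unfold vIdx
  rw [dif_pos (by omega)]
  exact hv (Fin.le_def.mpr (by simpa using hj))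

end vIdx

theorem stmt9 {n : ℕ} (v : Fin n → ℝ) (hv : StrictAnti v) (hvpos : ∀ i, 0 < v i) (k : ℕ) (hk2 : 2 ≤ k) (hkn : k ≤ n)
    (i : Fin n) (p : ℝ) (hvi : vIdx v (n + 3 - k) < v i)
    (hp1 : vIdx v (n + 3 - k) ≤ p) (hp2 : p ≤ v i)
    (b : Fin n → ℝ)
    (hbdef : ∀ j : Fin n,
      b j = if j = i ∨ n + 2 - k ≤ j.val then v ⟨0, by omega⟩ else p) :
    NashEq v k b ∧ wins b i ∧ price k b = p := by
  set T : Finset (Fin n) := {j | n + 2 - k ≤ (j : ℕ)}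
  have hidx : n + 3 - k = n + 2 - k + 1 := by omega
  have hvT : ∀ j ∈ T, v j ≤ p := fun j hj =>
    (apply_le_vIdx_succ hv.antitone (mem_filter.mp hj).2).trans (hidx ▸ hp1)
  have hi : (i : ℕ) < n + 2 - k :=
    not_le.mp fun h => (hidx ▸ hvi).not_ge (apply_le_vIdx_succ hv.antitone h)
  have hiT : i ∉ T := by simp [T]; omega
  have hvmax : ∀ j, v j ≤ v ⟨0, by omega⟩ := fun j =>
    hv.antitone (Fin.le_def.mpr (Nat.zero_le _))
  have hph : p ≤ v ⟨0, by omega⟩ := hp2.trans (hvmax i)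
  have hb : b = twoLevelBids (insert i T) (v ⟨0, by omega⟩) p := funext fun j => by
    simp [hbdef, twoLevelBids, T]
  have hwins : wins b i := by
    refine hb ▸ wins_twoLevelBids hph (mem_insert_self i T) (fun j hj => ?_) fun hpv j => ?_
    · rcases mem_insert.mp hj with rfl | hjT
      exacts [le_rfl, Fin.le_def.mpr (hi.trans_le (mem_filter.mp hjT).2).le]
    · -- a tie at the top forces `v i = v 0`, i.e. `i` is the first agent
      rw [hv.injective (le_antisymm (hvmax i) (hpv ▸ hp2))]
      exact Fin.le_def.mpr (Nat.zero_le _)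
  have hcard : #(insert i T) + 1 = k := by
    rw [card_insert_of_notMem hiT, Fin.card_filter_le_val]; omega
  subst hb
  exact ⟨nashEq_twoLevelBids hk2 hkn ((vIdx_nonneg (fun j => (hvpos j).le) _).trans hp1) hph
    (mem_insert_self i T) hcard hwins hp2 hvmax
    (fun j hj hji => hvT j ((mem_insert.mp hj).resolve_left hji)), hwins,
    price_twoLevelBids (by omega) hkn hph (by omega)⟩
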